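/- Every λQ term M reduces by π-steps to its kernel image M^▽, and M^▽ is a π-normal form. -/

import Mathlib

namespace Paper

mutual
/-- Terms of the simplified LJQ calculus λQ. -/
inductive QTm : Type
| up : QVal → QTm
| li : String → QVal → String → QTm → QTm
| cut : QTm → String → QTm → QTm
/-- Values of λQ. -/
inductive QVal : Type
| var : String → QVal
| lam : String → QTm → QVal
end

mutual
def QTm.fv : QTm → Finset String
| .up V => QVal.fv V
| .li x V y N => {x} ∪ QVal.fv V ∪ (QTm.fv N \ {y})
| .cut M x N => QTm.fv M ∪ (QTm.fv N \ {x})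
def QVal.fv : QVal → Finset String
| .var x => {x}
| .lam x M => QTm.fv M \ {x}
end

mutual
/-- Value substitution [V/y]- on λQ values. -/
def QVal.substV (V : QVal) (y : String) : QVal → QVal
| .var z => if z = y then V else .var z
| .lam z M => if z = y then .lam z M else .lam z (QTm.substT V y M)
/-- Value substitution [V/y]- on λQ terms, with the critical clauses on y(W,z.P). -/
def QTm.substT (V : QVal) (y : String) : QTm → QTm
| .up W => .up (QVal.substV V y W)
| .li x W z P =>
    if x = y then
      match V with
      | .var v => .li v (QVal.substV V y W) z (if z = y then P else QTm.substT V y P)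
      | .lam a M => .cut (.up (.lam a M)) y
          (.li y (QVal.substV V y W) z (if z = y then P else QTm.substT V y P))
    else .li x (QVal.substV V y W) z (if z = y then P else QTm.substT V y P)
| .cut M x N => .cut (QTm.substT V y M) x (if x = y then N else QTm.substT V y N)
end

/-- Names for the reduction rules of λQ. -/
inductive QRule | bv | sigmav | etacut | pi1 | pi2

/-- A Bv-redex of λQ. -/
def IsBvRedex : QTm → Prop := fun t =>
  ∃ x M y V z N, t = .cut (.up (.lam x M)) y (.li y V z N)
    ∧ y ∉ QVal.fv V ∧ y ∉ QTm.fv N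

mutual
/-- One-step rule-tagged reduction of λQ on terms, closed under all contexts. -/
inductive QStepT : QRule → QTm → QTm → Prop
| bv {x M y V z N} : y ∉ QVal.fv V → y ∉ QTm.fv N →
    QStepT .bv (.cut (.up (.lam x M)) y (.li y V z N)) (.cut (.cut (.up V) x M) z N)
| sigmav {V y N} : ¬ IsBvRedex (.cut (.up V) y N) →
    QStepT .sigmav (.cut (.up V) y N) (QTm.substT V y N)
| etacut {M x} : QStepT .etacut (.cut M x (.up (.var x))) M
| pi1 {z V y P x N} : QStepT .pi1 (.cut (.li z V y P) x N) (.li z V y (.cut P x N))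
| pi2 {M y P x N} : QStepT .pi2 (.cut (.cut M y P) x N) (.cut M y (.cut P x N))
| upC {r V V'} : QStepV r V V' → QStepT r (.up V) (.up V')
| liC1 {r x V V' y N} : QStepV r V V' → QStepT r (.li x V y N) (.li x V' y N)
| liC2 {r x V y N N'} : QStepT r N N' → QStepT r (.li x V y N) (.li x V y N')
| cutL {r M M' x N} : QStepT r M M' → QStepT r (.cut M x N) (.cut M' x N)
| cutR {r M x N N'} : QStepT r N N' → QStepT r (.cut M x N) (.cut M x N')
/-- One-step rule-tagged reduction of λQ on values. -/
inductive QStepV : QRule → QVal → QVal → Prop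
| lamC {r x M M'} : QStepT r M M' → QStepV r (.lam x M) (.lam x M')
end

mutual
/-- Terms of the kernel LNF of λQ (as a predicate on λQ terms: every cut is
of the form C(↑V, x.N)). -/
inductive LNFt : QTm → Prop
| up {V} : LNFv V → LNFt (.up V)
| li {x V y N} : LNFv V → LNFt N → LNFt (.li x V y N)
| cut {V x N} : LNFv V → LNFt N → LNFt (.cut (.up V) x N)
/-- Values of LNF. -/
inductive LNFv : QVal → Prop
| var {x} : LNFv (.var x)
| lam {x M} : LNFt M → LNFv (.lam x M)
end

/-- The generalized left-permuted cut C(M : x.N), defined by recursion on M. -/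
def gcut : QTm → String → QTm → QTm
| .up V, x, N => .cut (.up V) x N
| .li z V y P, x, N => .li z V y (gcut P x N)
| .cut A y P, x, N => .cut A y (gcut P x N)

/-- A π-step of λQ (a π₁- or π₂-step). -/
def PiStep (a b : QTm) : Prop := QStepT .pi1 a b ∨ QStepT .pi2 a b

mutual
/-- The map (-)^▽ from λQ into its kernel LNF (terms). -/
def QTm.knl : QTm → QTm
| .up V => .up (QVal.knl V)
| .li x V y N => .li x (QVal.knl V) y (QTm.knl N)
| .cut M x N => gcut (QTm.knl M) x (QTm.knl N)
/-- The map (-)^▽▽ on values. -/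
def QVal.knl : QVal → QVal
| .var x => .var x
| .lam x M => .lam x (QTm.knl M)
end

/-!
A π-step moves a cut past the head of its left premise, so iterating π₁/π₂ turns
`C(M, x.N)` into the generalized cut `C(M : x.N)`; by induction on `M` this gives `M ↠π M^▽`.
The image `M^▽` lies in LNF, where every cut has a value on its left, and neither π-redex
has that shape, in any context.
-/

def PiStepV (a b : QVal) : Prop := QStepV .pi1 a b ∨ QStepV .pi2 a b

theorem reflTransGen_piStep_map {f : QTm → QTm}
    (hf : ∀ {r a b}, QStepT r a b → QStepT r (f a) (f b)) {a b : QTm}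
    (h : Relation.ReflTransGen PiStep a b) : Relation.ReflTransGen PiStep (f a) (f b) :=
  h.lift f fun _ _ hab => hab.imp hf hf

theorem reflTransGen_piStepV_map {f : QVal → QTm}
    (hf : ∀ {r a b}, QStepV r a b → QStepT r (f a) (f b)) {a b : QVal}
    (h : Relation.ReflTransGen PiStepV a b) : Relation.ReflTransGen PiStep (f a) (f b) :=
  h.lift f fun _ _ hab => hab.imp hf hf

theorem reflTransGen_piStep_cut_gcut : ∀ (M : QTm) (x : String) (N : QTm),
    Relation.ReflTransGen PiStep (.cut M x N) (gcut M x N)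
  | .up _, _, _ => .refl
  | .li _ _ _ P, x, N =>
      .head (.inl .pi1) (reflTransGen_piStep_map .liC2 (reflTransGen_piStep_cut_gcut P x N))
  | .cut _ _ P, x, N =>
      .head (.inr .pi2) (reflTransGen_piStep_map .cutR (reflTransGen_piStep_cut_gcut P x N))

mutual
theorem QTm.reflTransGen_piStep_knl : ∀ M : QTm, Relation.ReflTransGen PiStep M M.knl
  | .up V => reflTransGen_piStepV_map .upC V.reflTransGen_piStepV_knl
  | .li _ V _ N =>
      (reflTransGen_piStepV_map .liC1 V.reflTransGen_piStepV_knl).trans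
        (reflTransGen_piStep_map .liC2 N.reflTransGen_piStep_knl)
  | .cut M x N =>
      (reflTransGen_piStep_map .cutL M.reflTransGen_piStep_knl).trans <|
        (reflTransGen_piStep_map .cutR N.reflTransGen_piStep_knl).trans <|
          reflTransGen_piStep_cut_gcut M.knl x N.knl
theorem QVal.reflTransGen_piStepV_knl : ∀ V : QVal, Relation.ReflTransGen PiStepV V V.knl
  | .var _ => .refl
  | .lam x M =>
      M.reflTransGen_piStep_knl.lift (QVal.lam x) fun _ _ hab => hab.imp .lamC .lamC
end

theorem LNFt.gcut : ∀ {M : QTm}, LNFt M → ∀ (x : String) {N : QTm}, LNFt N →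
    LNFt (gcut M x N)
  | _, .up hV, _, _, hN => .cut hV hN
  | _, .li hV hP, x, _, hN => .li hV (hP.gcut x hN)
  | _, .cut hV hP, x, _, hN => .cut hV (hP.gcut x hN)

mutual
theorem QTm.lnft_knl : ∀ M : QTm, LNFt M.knl
  | .up V => .up V.lnfv_knl
  | .li _ V _ N => .li V.lnfv_knl N.lnft_knl
  | .cut M x N => M.lnft_knl.gcut x N.lnft_knl
theorem QVal.lnfv_knl : ∀ V : QVal, LNFv V.knl
  | .var _ => .var
  | .lam _ M => .lam M.lnft_knl
end

mutual
theorem LNFt.not_qStepT_pi : ∀ {r t t'}, LNFt t → QStepT r t t' →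
    r = .pi1 ∨ r = .pi2 → False
  | _, _, _, _, .bv _ _, hr => by rcases hr with h | h <;> cases h
  | _, _, _, _, .sigmav _, hr => by rcases hr with h | h <;> cases h
  | _, _, _, _, .etacut, hr => by rcases hr with h | h <;> cases h
  | _, _, _, hl, .pi1, _ => by cases hl
  | _, _, _, hl, .pi2, _ => by cases hl
  | _, _, _, .up hV, .upC s, hr => hV.not_qStepV_pi s hr
  | _, _, _, .li hV _, .liC1 s, hr => hV.not_qStepV_pi s hr
  | _, _, _, .li _ hN, .liC2 s, hr => hN.not_qStepT_pi s hr
  | _, _, _, .cut hV _, .cutL s, hr => (LNFt.up hV).not_qStepT_pi s hr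
  | _, _, _, .cut _ hN, .cutR s, hr => hN.not_qStepT_pi s hr
theorem LNFv.not_qStepV_pi : ∀ {r V V'}, LNFv V → QStepV r V V' →
    r = .pi1 ∨ r = .pi2 → False
  | _, _, _, .lam hM, .lamC s, hr => hM.not_qStepT_pi s hr
end

theorem LNFt.not_piStep {t t' : QTm} (ht : LNFt t) : ¬ PiStep t t'
  | .inl h => ht.not_qStepT_pi h (.inl rfl)
  | .inr h => ht.not_qStepT_pi h (.inr rfl)

/-- every λQ term M reduces by π-steps to M^▽, and M^▽ is a
π-normal form. -/
theorem stmt7 (M : QTm) :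
    Relation.ReflTransGen PiStep M (QTm.knl M) ∧ ¬ ∃ N, PiStep (QTm.knl M) N :=
  ⟨M.reflTransGen_piStep_knl, fun ⟨_, h⟩ => M.lnft_knl.not_piStep h⟩

end Paper
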